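/- arXiv:1209.1307 — 2 statements merged into one kernel-verified Lean document; each statement's English description precedes it below -/
import Mathlib

section
/- Suppose θ > κ₂ > κ₁ ≥ ℵ₀ are cardinals with D(θ,κ₁,κ₂) = θ, and suppose that for every cardinal λ ≥ θ with cf(λ) = cf(κ₂) there exists a cardinal ν with κ₁ ≤ ν < κ₂ such that λ = sup{δ : δ < λ and D(δ,κ₁,ν) ≤ λ}. Then D(λ,κ₁,κ₂) = λ for every cardinal λ ≥ θ. -/
open Cardinal

/-- A family `D` of subsets of `α` is dense in `[α]^{κ₂}`. -/
def IsDenseIn {α : Type u} (D : Set (Set α)) (κ₂ : Cardinal.{u}) : Prop :=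
  ∀ Y : Set α, #Y = κ₂ → ∃ Z ∈ D, Z ⊆ Y

/-- The density `D(λ,κ₁,κ₂)`. -/
noncomputable def Density (l κ₁ κ₂ : Cardinal.{u}) : Cardinal.{u} :=
  sInf { c : Cardinal.{u} | ∃ D : Set (Set l.out),
    (∀ X ∈ D, #X = κ₁) ∧ IsDenseIn D κ₂ ∧ c = #D }

/-!
Fewer than `λ` sets of size `κ₁` cover fewer than `λ` points, so some `κ₂`-set avoids them all;
this gives `λ ≤ D(λ,κ₁,κ₂)`.

For the upper bound, argue by induction on `λ > θ`, realising `λ` as its initial ordinal, and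
cover `[λ]^{κ₂}` by the families for the initial segments `Iio x`, of which there are `λ`.
A `κ₂`-set `Y` either has `κ₂` points below some `x`, and then the induction hypothesis applies
to a segment of size at least `θ` containing them, or it is cofinal of order type `κ₂`, which
forces `cf λ = cf κ₂`. In the latter case `ν` points of `Y` lie below some `x`, and since
`λ = sup {δ | D(δ,κ₁,ν) ≤ λ}` they lie in a segment of such a size `δ`.
-/

universe u

open Set Order Ordinal Function

section WellOrder

variable {α : Type u} [LinearOrder α]

theorem lt_of_mk_Iio_lt_mk_Iio {x y : α} (h : #(Iio x) < #(Iio y)) : x < y :=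
  lt_of_not_ge fun hyx => h.not_ge (mk_le_mk_of_subset (Iio_subset_Iio hyx))

theorem mk_inter_Iio_eq_mk_Iio {Y : Set α} (y : Y) : #(Y ∩ Iio (y : α) : Set α) = #(Iio y) := by
  rw [← mk_image_eq Subtype.val_injective]
  congr
  ext x
  simp [← Subtype.coe_lt_coe, and_comm]

variable [WellFoundedLT α]

theorem exists_mk_Iio_eq {c : Cardinal.{u}} (h : c.ord < typeLT α) : ∃ x : α, #(Iio x) = c :=
  ⟨enum (· < ·) ⟨c.ord, h⟩, by
    have := congrArg card (typein_enum (α := α) (· < ·) h)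
    rwa [card_ord, card_typein] at this⟩

theorem exists_mk_inter_Iio_eq {Y : Set α} {c : Cardinal.{u}} (h : c.ord < typeLT Y) :
    ∃ y : α, #(Y ∩ Iio y : Set α) = c := by
  obtain ⟨y, hy⟩ := exists_mk_Iio_eq h
  exact ⟨y, (mk_inter_Iio_eq_mk_Iio y).trans hy⟩

theorem exists_mk_inter_Iio_eq_of_lt {Y : Set α} {c : Cardinal.{u}} (h : c < #Y) :
    ∃ y : α, #(Y ∩ Iio y : Set α) = c :=
  exists_mk_inter_Iio_eq ((ord_lt_ord.2 h).trans_le (ord_card_le (typeLT Y)))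

theorem cof_eq_of_forall_mk_inter_Iio_lt {Y : Set α} (h : ∀ x, #(Y ∩ Iio x : Set α) < #Y) :
    Order.cof α = (#Y).ord.cof := by
  have hcofinal : IsCofinal Y := by
    by_contra hY
    obtain ⟨x, hx⟩ := not_isCofinal_iff.1 hY
    have : Y ∩ Iio x = Y := inter_eq_left.2 hx
    exact (h x).ne (congrArg (fun s : Set α => #s) this)
  have htype : typeLT Y = (#Y).ord := by
    refine (le_of_not_gt fun hlt => ?_).antisymm (ord_card_le (typeLT Y))
    obtain ⟨x, hx⟩ := exists_mk_inter_Iio_eq hlt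
    exact (h x).ne hx
  rw [← cof_eq_of_isCofinal hcofinal, ← cof_type, htype]

end WellOrder

section Density

variable {α β : Type u} {κ₁ κ₂ : Cardinal.{u}}

def densityValues (α : Type u) (κ₁ κ₂ : Cardinal.{u}) : Set Cardinal.{u} :=
  {c | ∃ D : Set (Set α), (∀ X ∈ D, #X = κ₁) ∧ IsDenseIn D κ₂ ∧ c = #D}

theorem IsDenseIn.exists_image_subset {D : Set (Set α)} {κ : Cardinal.{u}} (hD : IsDenseIn D κ)
    {f : α → β} (hf : Injective f) {Y : Set β} (hYf : Y ⊆ range f) (hY : #Y = κ) :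
    ∃ Z ∈ D, f '' Z ⊆ Y := by
  obtain ⟨Z, hZD, hZY⟩ :=
    hD (f ⁻¹' Y) ((mk_preimage_of_injective_of_subset_range f Y hf hYf).trans hY)
  exact ⟨Z, hZD, image_subset_iff.2 hZY⟩

theorem densityValues_subset (e : α ≃ β) : densityValues α κ₁ κ₂ ⊆ densityValues β κ₁ κ₂ := by
  rintro _ ⟨D, hD₁, hD, rfl⟩
  refine ⟨image e '' D, ?_, fun Y hY => ?_, ?_⟩
  · rintro _ ⟨X, hX, rfl⟩
    rw [mk_image_eq e.injective, hD₁ X hX]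
  · obtain ⟨Z, hZD, hZY⟩ := hD.exists_image_subset e.injective (by simp) hY
    exact ⟨e '' Z, mem_image_of_mem _ hZD, hZY⟩
  · rw [mk_image_eq (image_injective.2 e.injective)]

theorem density_mk (α : Type u) (κ₁ κ₂ : Cardinal.{u}) :
    Density #α κ₁ κ₂ = sInf (densityValues α κ₁ κ₂) :=
  congrArg sInf ((densityValues_subset outMkEquiv).antisymm (densityValues_subset outMkEquiv.symm))

theorem density_le_of_isDenseIn {D : Set (Set α)} (hD₁ : ∀ X ∈ D, #X = κ₁) (hD : IsDenseIn D κ₂) :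
    Density #α κ₁ κ₂ ≤ #D := by
  rw [density_mk]
  exact csInf_le' ⟨D, hD₁, hD, rfl⟩

theorem exists_isDenseIn_mk_eq_density (α : Type u) (h : κ₁ ≤ κ₂) :
    ∃ D : Set (Set α), (∀ X ∈ D, #X = κ₁) ∧ IsDenseIn D κ₂ ∧ #D = Density #α κ₁ κ₂ := by
  have hne : (densityValues α κ₁ κ₂).Nonempty := by
    refine ⟨_, {Z | #Z = κ₁}, fun X hX => hX, fun Y hY => ?_, rfl⟩
    obtain ⟨Z, hZY, hZ⟩ := le_mk_iff_exists_subset.1 (hY ▸ h)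
    exact ⟨Z, hZ, hZY⟩
  obtain ⟨D, hD₁, hD, hDc⟩ := csInf_mem hne
  exact ⟨D, hD₁, hD, by rw [density_mk, hDc]⟩

theorem exists_family_subset_of_density (A : Set α) (h : κ₁ ≤ κ₂) :
    ∃ F : Set (Set α), (∀ Z ∈ F, #Z = κ₁) ∧ #F = Density #A κ₁ κ₂ ∧
      ∀ Y ⊆ A, #Y = κ₂ → ∃ Z ∈ F, Z ⊆ Y := by
  obtain ⟨D, hD₁, hD, hDc⟩ := exists_isDenseIn_mk_eq_density A h
  refine ⟨image Subtype.val '' D, ?_, ?_, fun Y hYA hY => ?_⟩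
  · rintro _ ⟨X, hX, rfl⟩
    rw [mk_image_eq Subtype.val_injective, hD₁ X hX]
  · rw [mk_image_eq (image_injective.2 Subtype.val_injective), hDc]
  · obtain ⟨Z, hZD, hZY⟩ := hD.exists_image_subset Subtype.val_injective (by simpa using hYA) hY
    exact ⟨_, mem_image_of_mem _ hZD, hZY⟩

theorem mk_le_density (hκ₁ : ℵ₀ ≤ κ₁) (h₁ : κ₁ < #α) (h₂ : κ₂ ≤ #α) (h₁₂ : κ₁ ≤ κ₂) :
    #α ≤ Density #α κ₁ κ₂ := by
  obtain ⟨D, hD₁, hD, hDc⟩ := exists_isDenseIn_mk_eq_density α h₁₂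
  rw [← hDc]
  by_contra! hDα
  have hα : ℵ₀ ≤ #α := hκ₁.trans h₁.le
  have : Infinite α := infinite_iff.2 hα
  have hU : #(⋃₀ D : Set α) < #α := calc
    #(⋃₀ D : Set α) ≤ #D * κ₁ :=
      (mk_sUnion_le D).trans (mul_le_mul' le_rfl (ciSup_le' fun X => (hD₁ X X.2).le))
    _ < #α := mul_lt_of_lt hα hDα h₁
  obtain ⟨Y, hYU, hY⟩ := le_mk_iff_exists_subset.1 ((mk_compl_of_infinite _ hU).symm ▸ h₂)
  obtain ⟨Z, hZD, hZY⟩ := hD Y hY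
  obtain ⟨z, hz⟩ : Z.Nonempty := by
    rw [← nonempty_coe_sort, ← mk_ne_zero_iff, hD₁ Z hZD]
    exact (aleph0_pos.trans_le hκ₁).ne'
  exact hYU (hZY hz) ⟨Z, hZD, hz⟩

theorem density_le_of_forall_exists_piece {ι : Type u} {τ : Cardinal.{u}} (hα₀ : ℵ₀ ≤ #α)
    (hι : #ι ≤ #α) (S : ι → Set α) (hτ : κ₁ ≤ τ)
    (h : ∀ Y : Set α, #Y = κ₂ → ∃ i, τ ≤ #(Y ∩ S i : Set α) ∧ Density #(S i) κ₁ τ ≤ #α) :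
    Density #α κ₁ κ₂ ≤ #α := by
  choose F hF₁ hFc hF using fun i => exists_family_subset_of_density (S i) hτ
  let I := {i | Density #(S i) κ₁ τ ≤ #α}
  refine (density_le_of_isDenseIn (D := ⋃ i : I, F i) ?_ fun Y hY => ?_).trans ?_
  · simp only [mem_iUnion]
    rintro X ⟨i, hX⟩
    exact hF₁ i X hX
  · obtain ⟨i, hiY, hi⟩ := h Y hY
    obtain ⟨Y', hY'Y, hY'⟩ := le_mk_iff_exists_subset.1 hiY
    obtain ⟨Z, hZF, hZY'⟩ := hF i Y' (hY'Y.trans inter_subset_right) hY'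
    exact ⟨Z, mem_iUnion.2 ⟨⟨i, hi⟩, hZF⟩, hZY'.trans (hY'Y.trans inter_subset_left)⟩
  · calc #(⋃ i : I, F i) ≤ #I * ⨆ i : I, #(F i) := mk_iUnion_le _
      _ ≤ #α * #α := mul_le_mul' ((mk_set_le I).trans hι) (ciSup_le' fun i => (hFc i).trans_le i.2)
      _ = #α := mul_eq_self hα₀

end Density

section InitialWellOrder

variable {α : Type u} [LinearOrder α] [WellFoundedLT α] {κ₁ κ₂ : Cardinal.{u}}

theorem exists_mk_Iio_eq_of_lt (hα : (#α).ord = typeLT α) {δ : Cardinal.{u}} (h : δ < #α) :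
    ∃ x : α, #(Iio x) = δ :=
  exists_mk_Iio_eq (hα ▸ ord_lt_ord.2 h)

theorem density_le_of_eq_sSup (hα : (#α).ord = typeLT α) (hα₀ : ℵ₀ ≤ #α) {ν : Cardinal.{u}}
    (hν₁ : κ₁ ≤ ν) (hν₂ : ν < κ₂) (hsup : #α = sSup {δ | δ < #α ∧ Density δ κ₁ ν ≤ #α}) :
    Density #α κ₁ κ₂ ≤ #α := by
  refine density_le_of_forall_exists_piece hα₀ le_rfl Iio hν₁ fun Y hY => ?_
  obtain ⟨x, hx⟩ := exists_mk_inter_Iio_eq_of_lt (hY ▸ hν₂ : ν < #Y)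
  obtain ⟨δ, ⟨hδα, hδ⟩, hxδ⟩ := exists_lt_of_lt_csSup' ((mk_Iio_lt x hα).trans_eq hsup)
  obtain ⟨y, rfl⟩ := exists_mk_Iio_eq_of_lt hα hδα
  have hxy : x ≤ y := (lt_of_mk_Iio_lt_mk_Iio hxδ).le
  exact ⟨y, hx ▸ mk_le_mk_of_subset (inter_subset_inter_right _ (Iio_subset_Iio hxy)), hδ⟩

theorem density_le_of_cof_ne (hα : (#α).ord = typeLT α) (hα₀ : ℵ₀ ≤ #α) {θ : Cardinal.{u}}
    (hθ : θ < #α) (h₁₂ : κ₁ ≤ κ₂) (hcof : Order.cof α ≠ κ₂.ord.cof)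
    (IH : ∀ μ, θ ≤ μ → μ < #α → Density μ κ₁ κ₂ ≤ μ) :
    Density #α κ₁ κ₂ ≤ #α := by
  refine density_le_of_forall_exists_piece hα₀ le_rfl Iio h₁₂ fun Y hY => ?_
  obtain ⟨x, hx⟩ : ∃ x, κ₂ ≤ #(Y ∩ Iio x : Set α) := by
    by_contra! h
    exact hcof (hY ▸ cof_eq_of_forall_mk_inter_Iio_lt (hY ▸ h))
  obtain ⟨y, hy⟩ := exists_mk_Iio_eq_of_lt hα hθ
  have hθz : θ ≤ #(Iio (max x y)) := hy ▸ mk_le_mk_of_subset (Iio_subset_Iio (le_max_right x y))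
  have hz : #(Iio (max x y)) < #α := mk_Iio_lt _ hα
  exact ⟨max x y, hx.trans (mk_le_mk_of_subset (inter_subset_inter_right _
    (Iio_subset_Iio (le_max_left x y)))), (IH _ hθz hz).trans hz.le⟩

end InitialWellOrder

theorem density_end_segment (θ κ₁ κ₂ : Cardinal.{0})
    (hκ₁ : ℵ₀ ≤ κ₁) (h12 : κ₁ < κ₂) (h2θ : κ₂ < θ)
    (hθ : Density θ κ₁ κ₂ = θ)
    (hsup : ∀ lam : Cardinal.{0}, θ ≤ lam → lam.ord.cof = κ₂.ord.cof →
      ∃ ν : Cardinal.{0}, κ₁ ≤ ν ∧ ν < κ₂ ∧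
        lam = sSup { δ : Cardinal.{0} | δ < lam ∧ Density δ κ₁ ν ≤ lam }) :
    ∀ lam : Cardinal.{0}, θ ≤ lam → Density lam κ₁ κ₂ = lam := by
  have hθ₀ : ℵ₀ ≤ θ := hκ₁.trans (h12.trans h2θ).le
  have upper : ∀ lam, θ ≤ lam → Density lam κ₁ κ₂ ≤ lam := by
    intro lam
    induction lam using WellFoundedLT.induction with
    | ind lam IH =>
    intro hθlam
    obtain rfl | hθlam := hθlam.eq_or_lt
    · exact hθ.le
    have hα : (#lam.ord.ToType).ord = typeLT lam.ord.ToType := by simp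
    have hα₀ : ℵ₀ ≤ #lam.ord.ToType := by simpa using hθ₀.trans hθlam.le
    by_cases hcof : lam.ord.cof = κ₂.ord.cof
    · obtain ⟨ν, hν₁, hν₂, hνsup⟩ := hsup lam hθlam.le hcof
      simpa using density_le_of_eq_sSup hα hα₀ hν₁ hν₂ (by simpa using hνsup)
    · simpa using density_le_of_cof_ne hα hα₀ (by simpa using hθlam) h12.le (by simpa using hcof)
        (by simpa using fun μ hθμ hμ => IH μ hμ hθμ)
  intro lam hθlam
  obtain ⟨α, rfl⟩ : ∃ α : Type, #α = lam := ⟨_, mk_out lam⟩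
  exact (upper _ hθlam).antisymm (mk_le_density hκ₁ (h12.trans (h2θ.trans_le hθlam))
    (h2θ.le.trans hθlam) h12.le)
end

section
/- Let V be a set, F : P(V) → P(V) an anti-monotone function, and κ an infinite cardinal. Then: (1) the union of two F_κ-closed subsets of V is F_κ-closed; (2) if θ is a limit ordinal with cf(θ) ≠ cf(κ) and ⟨D_α : α < θ⟩ is a ⊆-increasing sequence of F_κ-closed subsets of V, then ⋃_{α<θ} D_α is F_κ-closed. -/
open Cardinal

/-- `F` is anti-monotone: `A ⊆ B` implies `F B ⊆ F A`. -/
def AntiMonotone {α : Type u} (F : Set α → Set α) : Prop :=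
  ∀ A B : Set α, A ⊆ B → F B ⊆ F A

/-- `D` is `F_κ`-closed: `F Y ⊆ D` for every `Y ⊆ D` of cardinality `κ`. -/
def FClosed {α : Type u} (F : Set α → Set α) (κ : Cardinal.{u}) (D : Set α) : Prop :=
  ∀ Y ⊆ D, #Y = κ → F Y ⊆ D

/-!
Both parts rest on one observation: if `D` is `F_κ`-closed and `|Y ∩ D| = κ`, then
`F Y ⊆ F (Y ∩ D) ⊆ D`. For `D₁ ∪ D₂` one of `Y ∩ D₁`, `Y ∩ D₂` has size `κ` because `κ` is
infinite. For an increasing chain `(D_i)` indexed by a well-order `ι`, if every `Y ∩ D_i` had size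
`< κ` then `cf ι = cf κ`: either the sizes stay below some `μ < κ`, and covering `Y` by a cofinal
subchain gives `κ ≤ cf ι · μ`, so `cf ι = κ` and `κ` is regular; or they are cofinal in `κ`, and
`i ↦ |Y ∩ D_i|` is a monotone cofinal map from `ι` to `κ`.
-/

open Set Order

universe u

variable {ι α : Type u}

theorem cof_le_mk_iUnion_of_forall_not_subset [LinearOrder ι] {Y : ι → Set α}
    (hY : Monotone Y) (h : ∀ i, ¬ ⋃ j, Y j ⊆ Y i) : cof ι ≤ #(⋃ i, Y i) := by
  have hidx (y : ⋃ i, Y i) : ∃ i, (y : α) ∈ Y i := mem_iUnion.1 y.2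
  choose idx hidx using hidx
  refine (cof_le (s := range idx) fun j ↦ ?_).trans mk_range_le
  obtain ⟨y, hy, hyj⟩ := not_subset.1 (h j)
  exact ⟨_, mem_range_self ⟨y, hy⟩, le_of_not_ge fun hle ↦ hyj (hY hle (hidx ⟨y, hy⟩))⟩

theorem mk_iUnion_le_cof_mul [Preorder ι] {Y : ι → Set α} (hY : Monotone Y) {μ : Cardinal}
    (hμ : ∀ i, #(Y i) ≤ μ) : #(⋃ i, Y i) ≤ cof ι * μ := by
  obtain ⟨S, hS, hSc⟩ := exists_cof_eq ι
  have hsub : ⋃ i, Y i ⊆ ⋃ i ∈ S, Y i := iUnion_subset fun i ↦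
    let ⟨j, hj, hij⟩ := hS i
    (hY hij).trans (subset_biUnion_of_mem hj)
  calc #(⋃ i, Y i) ≤ #(⋃ i ∈ S, Y i) := mk_le_mk_of_subset hsub
    _ ≤ #S * ⨆ i : S, #(Y i) := mk_biUnion_le Y S
    _ ≤ cof ι * μ := by
      rw [hSc]
      gcongr
      exact ciSup_le' fun i ↦ hμ i

theorem Order.cof_congr_of_monotone {β : Type u} [LinearOrder α] [Preorder β] [NoMaxOrder β]
    {f : α → β} (hf : Monotone f) (hf' : IsCofinal (range f)) : cof α = cof β := by
  apply le_antisymm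
  · rw [le_cof_iff]
    intro S hS
    have hpre (s : S) : ∃ a, (s : β) ≤ f a := by simpa using hf' s
    choose g hg using hpre
    refine (cof_le (s := range g) fun a ↦ ?_).trans mk_range_le
    obtain ⟨b, hb⟩ := exists_gt (f a)
    obtain ⟨s, hs, hbs⟩ := hS b
    refine ⟨_, mem_range_self ⟨s, hs⟩, le_of_not_gt fun hlt ↦ ?_⟩
    exact (hb.trans_le (hbs.trans ((hg ⟨s, hs⟩).trans (hf hlt.le)))).false
  · rw [le_cof_iff]
    exact fun S hS ↦ (cof_le (hS.image hf hf')).trans mk_image_le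

theorem cof_eq_cof_ord_of_monotone_of_forall_lt [LinearOrder ι] {κ : Cardinal.{u}}
    {c : ι → Cardinal.{u}} (hκ : ℵ₀ ≤ κ) (hc : Monotone c) (hlt : ∀ i, c i < κ)
    (hub : ∀ μ < κ, ∃ i, μ < c i) : cof ι = κ.ord.cof := by
  have := Cardinal.noMaxOrder hκ
  rw [← Ordinal.cof_toType]
  refine cof_congr_of_monotone (f := fun i ↦ Ordinal.ToType.mk ⟨(c i).ord, ord_lt_ord.2 (hlt i)⟩)
    (fun i j hij ↦ Ordinal.ToType.mk.monotone (ord_le_ord.2 (hc hij))) fun x ↦ ?_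
  obtain ⟨i, hi⟩ := hub _ (lt_ord.1 (mem_Iio.1 (Ordinal.ToType.toOrd x).2))
  refine ⟨_, mem_range_self i, ?_⟩
  rw [← Ordinal.ToType.mk.symm_apply_le]
  exact (lt_ord.2 hi).le

theorem cof_eq_cof_ord_mk_iUnion [LinearOrder ι] [WellFoundedLT ι] {Y : ι → Set α}
    (hY : Monotone Y) (hκ : ℵ₀ ≤ #(⋃ i, Y i)) (hlt : ∀ i, #(Y i) < #(⋃ j, Y j)) :
    cof ι = (#(⋃ i, Y i)).ord.cof := by
  set κ := #(⋃ i, Y i)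
  by_cases hbdd : ∃ μ < κ, ∀ i, #(Y i) ≤ μ
  · obtain ⟨μ, hμκ, hμ⟩ := hbdd
    have hle : cof ι ≤ κ := cof_le_mk_iUnion_of_forall_not_subset hY fun i hi ↦
      (mk_le_mk_of_subset hi).not_gt (hlt i)
    have hge : κ ≤ cof ι := le_of_not_gt fun hcof ↦
      (mk_iUnion_le_cof_mul hY hμ).not_gt (mul_lt_of_lt hκ hcof hμκ)
    rw [← le_antisymm hle hge, cof_ord_cof]
  · push Not at hbdd
    exact cof_eq_cof_ord_of_monotone_of_forall_lt hκ
      (fun i j hij ↦ mk_le_mk_of_subset (hY hij)) hlt hbdd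

theorem mk_inter_eq_or_mk_inter_eq_of_subset_union {Y A B : Set α} (hY : Y ⊆ A ∪ B)
    (hκ : ℵ₀ ≤ #Y) : #(Y ∩ A : Set α) = #Y ∨ #(Y ∩ B : Set α) = #Y := by
  by_contra! h
  have hA := (mk_le_mk_of_subset inter_subset_left).lt_of_ne h.1
  have hB := (mk_le_mk_of_subset inter_subset_left).lt_of_ne h.2
  have hcover : Y = (Y ∩ A) ∪ (Y ∩ B) := by rw [← inter_union_distrib_left, inter_eq_left.2 hY]
  refine (mk_union_le (Y ∩ A) (Y ∩ B)).not_gt ?_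
  rw [← hcover]
  exact add_lt_of_lt hκ hA hB

namespace FClosed

variable {F : Set α → Set α} {κ : Cardinal.{u}}

theorem apply_subset_of_mk_inter_eq (hF : AntiMonotone F) {D Y : Set α} (hD : FClosed F κ D)
    (hY : #(Y ∩ D : Set α) = κ) : F Y ⊆ D :=
  (hF _ _ inter_subset_left).trans (hD _ inter_subset_right hY)

theorem union (hF : AntiMonotone F) (hκ : ℵ₀ ≤ κ) {D₁ D₂ : Set α} (h₁ : FClosed F κ D₁)
    (h₂ : FClosed F κ D₂) : FClosed F κ (D₁ ∪ D₂) := by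
  rintro Y hY rfl
  rcases mk_inter_eq_or_mk_inter_eq_of_subset_union hY hκ with hA | hB
  · exact (h₁.apply_subset_of_mk_inter_eq hF hA).trans subset_union_left
  · exact (h₂.apply_subset_of_mk_inter_eq hF hB).trans subset_union_right

theorem iUnion_of_monotone [LinearOrder ι] [WellFoundedLT ι] (hF : AntiMonotone F)
    (hκ : ℵ₀ ≤ κ) {D : ι → Set α} (hD : Monotone D) (hcl : ∀ i, FClosed F κ (D i))
    (hcof : cof ι ≠ κ.ord.cof) : FClosed F κ (⋃ i, D i) := by
  rintro Y hY rfl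
  have hcover : ⋃ i, Y ∩ D i = Y := by rw [← inter_iUnion, inter_eq_left.2 hY]
  by_cases hbig : ∃ i, #(Y ∩ D i : Set α) = #Y
  · obtain ⟨i, hi⟩ := hbig
    exact ((hcl i).apply_subset_of_mk_inter_eq hF hi).trans (subset_iUnion D i)
  · push Not at hbig
    refine absurd ?_ hcof
    have hlt (i : ι) : #(Y ∩ D i : Set α) < #(⋃ j, Y ∩ D j) := by
      rw [hcover]
      exact (mk_le_mk_of_subset inter_subset_left).lt_of_ne (hbig i)
    rw [← hcover]
    exact cof_eq_cof_ord_mk_iUnion (fun i j hij ↦ inter_subset_inter_right Y (hD hij))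
      (by rwa [hcover]) hlt

end FClosed

theorem fclosed_union_and_chain {α : Type} (F : Set α → Set α) (hF : AntiMonotone F)
    (κ : Cardinal.{0}) (hκ : ℵ₀ ≤ κ) :
    (∀ D₁ D₂ : Set α, FClosed F κ D₁ → FClosed F κ D₂ → FClosed F κ (D₁ ∪ D₂)) ∧
    (∀ θ : Ordinal.{0}, Order.IsSuccLimit θ → θ.cof ≠ κ.ord.cof →
      ∀ D : Ordinal.{0} → Set α, (∀ β γ : Ordinal, β ≤ γ → γ < θ → D β ⊆ D γ) →
        (∀ β < θ, FClosed F κ (D β)) → FClosed F κ (⋃ β ∈ Set.Iio θ, D β)) := by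
  refine ⟨fun D₁ D₂ ↦ FClosed.union hF hκ, fun θ _ hcof D hmono hcl ↦ ?_⟩
  have hunion : ⋃ β ∈ Iio θ, D β = ⋃ i : θ.ToType, D i.toOrd := by
    rw [biUnion_eq_iUnion]
    exact (Ordinal.ToType.mk.symm.surjective.iUnion_comp fun β : Iio θ ↦ D β).symm
  rw [hunion]
  exact FClosed.iUnion_of_monotone hF hκ
    (fun i j hij ↦ hmono _ _ (Ordinal.ToType.mk.symm.monotone hij) j.toOrd.2)
    (fun i ↦ hcl _ i.toOrd.2) (by rwa [Ordinal.cof_toType])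
end
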